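/- arXiv:1211.0419 — 2 statements merged into one kernel-verified Lean document; each statement's English description precedes it below -/
import Mathlib

section
/- Let A ⊆ Y with ∅ ≠ Cl₊A ≠ Y. Then Cl₊A = Inf A ∪ (Inf A + Int C). -/
open Set Pointwise

variable {Y : Type*} [AddCommGroup Y] [Module ℝ Y] [TopologicalSpace Y]
  [IsTopologicalAddGroup Y] [ContinuousSMul ℝ Y]

/-- Upper closure of a set with respect to the cone `C`. -/
def upClo (C A : Set Y) : Set Y := closure (A + C)

/-- Weakly minimal elements of `A` with respect to the cone `C`. -/
def wMinSet (C A : Set Y) : Set Y := {y ∈ A | ({y} - interior C) ∩ A = ∅}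

/-- Infimal set of `A` with respect to the cone `C`. -/
def infSet (C A : Set Y) : Set Y := wMinSet C (upClo C A)

open Filter Topology

/-! The inclusion `⊇` holds because `Cl₊A + Int C ⊆ Cl₊A`. Conversely, let `y ∈ Cl₊A` fail to be
weakly minimal, so `y - c ∈ Cl₊A` for some `c ∈ Int C`. The set of `t` with `y - t c ∈ Cl₊A` is
closed, and bounded above: for large `t` every `z` lies in `(y - t c) + Int C`, because
`t c + (z - y) ∈ Int C`, so an unbounded set would force `Cl₊A = Y`. At its supremum `s ≥ 1`
the point `y - s c` is weakly minimal, since a point of `Cl₊A` strictly below it would allow to go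
a little further along `-c`; hence `y = (y - s c) + s c ∈ Inf A + Int C`. -/

theorem Convex.add_self_subset_of_smul_subset {E : Type*} [AddCommGroup E] [Module ℝ E]
    {C : Set E} (hC : Convex ℝ C) (hCone : ∀ r : ℝ, 0 < r → r • C ⊆ C) : C + C ⊆ C :=
  calc C + C = (1 + 1 : ℝ) • C := by rw [hC.add_smul zero_le_one zero_le_one, one_smul]
    _ = (2 : ℝ) • C := by norm_num
    _ ⊆ C := hCone 2 two_pos

theorem smul_interior_subset_of_smul_subset {E : Type*} [AddCommGroup E] [Module ℝ E]
    [TopologicalSpace E] [ContinuousConstSMul ℝ E] {C : Set E}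
    (hCone : ∀ r : ℝ, 0 < r → r • C ⊆ C) (r : ℝ) (hr : 0 < r) :
    r • interior C ⊆ interior C :=
  interior_smul₀ hr.ne' C ▸ interior_mono (hCone r hr)

theorem IsOpen.eventually_add_smul_mem {E : Type*} [AddCommGroup E] [Module ℝ E]
    [TopologicalSpace E] [ContinuousAdd E] [ContinuousSMul ℝ E] {U : Set E} (hU : IsOpen U)
    {x : E} (hx : x ∈ U) (v : E) : ∀ᶠ t : ℝ in 𝓝 0, x + t • v ∈ U :=
  ((continuous_const.add (continuous_id.smul continuous_const)).tendsto' 0 x (by simp)).eventually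
    (hU.mem_nhds hx)

theorem closure_add_add_interior_subset {E : Type*} [AddCommGroup E] [TopologicalSpace E]
    [IsTopologicalAddGroup E] {C : Set E} (hCC : C + C ⊆ C) (S : Set E) :
    closure (S + C) + interior C ⊆ closure (S + C) :=
  calc closure (S + C) + interior C = S + C + interior C := isOpen_interior.closure_add _
    _ ⊆ S + C := by
      rw [add_assoc]
      exact add_subset_add_left ((add_subset_add_left interior_subset).trans hCC)
    _ ⊆ closure (S + C) := subset_closure

section WeakMinimality

variable {C B : Set Y}

theorem bddAbove_setOf_sub_smul_mem (hInt : ∀ r : ℝ, 0 < r → r • interior C ⊆ interior C)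
    (hB : B + interior C ⊆ B) (hBne : B ≠ univ) {c : Y} (hc : c ∈ interior C) (y : Y) :
    BddAbove {t : ℝ | y - t • c ∈ B} := by
  by_contra hunbdd
  refine hBne (eq_univ_of_forall fun z => ?_)
  have hlarge : ∀ᶠ t : ℝ in atTop, t • c + (z - y) ∈ interior C := by
    filter_upwards [tendsto_inv_atTop_zero.eventually
      (isOpen_interior.eventually_add_smul_mem hc (z - y)), eventually_gt_atTop 0] with t ht htpos
    simpa [smul_add, smul_smul, htpos.ne'] using hInt t htpos (smul_mem_smul_set ht)
  obtain ⟨t₀, ht₀⟩ := eventually_atTop.mp hlarge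
  obtain ⟨t, htB, ht₀t⟩ := not_bddAbove_iff.mp hunbdd t₀
  have hz : z = (y - t • c) + (t • c + (z - y)) := by abel
  exact hz ▸ hB (add_mem_add htB (ht₀ t ht₀t.le))

theorem sub_sSup_smul_mem_wMinSet (hBc : IsClosed B) (hB : B + interior C ⊆ B) {y c : Y}
    (hy : y ∈ B) (hbdd : BddAbove {t : ℝ | y - t • c ∈ B}) :
    y - sSup {t : ℝ | y - t • c ∈ B} • c ∈ wMinSet C B := by
  set T := {t : ℝ | y - t • c ∈ B}
  have hTc : IsClosed T := hBc.preimage (continuous_const.sub (continuous_id.smul continuous_const))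
  have hsT : sSup T ∈ T := hTc.csSup_mem ⟨0, by simpa [T] using hy⟩ hbdd
  refine ⟨hsT, eq_empty_iff_forall_notMem.mpr ?_⟩
  rintro _ ⟨⟨_, rfl, d, hd, rfl⟩, hdB⟩
  obtain ⟨ε, hεd, hε⟩ := (((isOpen_interior.eventually_add_smul_mem hd (-c)).filter_mono
    nhdsWithin_le_nhds).and (self_mem_nhdsWithin (a := (0 : ℝ)) (s := Ioi 0))).exists
  have hfurther : sSup T + ε ∈ T := by
    have hsplit : y - (sSup T + ε) • c = (y - sSup T • c - d) + (d + ε • -c) := by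
      rw [add_smul, smul_neg]; abel
    change y - (sSup T + ε) • c ∈ B
    exact hsplit ▸ hB (add_mem_add hdB hεd)
  linarith [le_csSup hbdd hfurther, show 0 < ε from hε]

theorem IsClosed.eq_wMinSet_union_wMinSet_add_interior (hBc : IsClosed B)
    (hInt : ∀ r : ℝ, 0 < r → r • interior C ⊆ interior C) (hB : B + interior C ⊆ B)
    (hBne : B ≠ univ) : B = wMinSet C B ∪ (wMinSet C B + interior C) := by
  refine Subset.antisymm (fun y hy => ?_)
    (union_subset (sep_subset _ _) ((add_subset_add_right (sep_subset _ _)).trans hB))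
  by_cases hw : ({y} - interior C) ∩ B = ∅
  · exact Or.inl ⟨hy, hw⟩
  obtain ⟨_, ⟨_, hy', c, hc, rfl⟩, hcB⟩ := nonempty_iff_ne_empty.mpr hw
  rw [mem_singleton_iff.mp hy'] at hcB
  have hbdd := bddAbove_setOf_sub_smul_mem hInt hB hBne hc y
  have hs : 1 ≤ sSup {t : ℝ | y - t • c ∈ B} := le_csSup hbdd (by simpa using hcB)
  exact Or.inr ⟨_, sub_sSup_smul_mem_wMinSet hBc hB hy hbdd, _,
    hInt _ (by linarith) (smul_mem_smul_set hc), sub_add_cancel _ _⟩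

end WeakMinimality

theorem stmt_3_general (C A : Set Y) (hC : Convex ℝ C)
    (hCone : ∀ r : ℝ, 0 < r → r • C ⊆ C)
    (h2 : upClo C A ≠ univ) :
    upClo C A = infSet C A ∪ (infSet C A + interior C) :=
  isClosed_closure.eq_wMinSet_union_wMinSet_add_interior
    (smul_interior_subset_of_smul_subset hCone)
    (closure_add_add_interior_subset (hC.add_self_subset_of_smul_subset hCone) A) h2

theorem stmt_3 (C A : Set Y) (hC : Convex ℝ C)
    (hCone : ∀ r : ℝ, 0 < r → r • C ⊆ C)
    (hInt : (interior C).Nonempty) (hIntNe : interior C ≠ univ)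
    (h1 : (upClo C A).Nonempty) (h2 : upClo C A ≠ univ) :
    upClo C A = infSet C A ∪ (infSet C A + interior C) :=
  stmt_3_general C A hC hCone h2
end

section
/- For a subset A of Y, if ∅ ≠ Cl₊A ≠ Y then A ∩ Inf A = wMin A, i.e., wMin A = A ∩ Inf A. -/
open Set Pointwise Topology

variable {Y : Type*} [AddCommGroup Y] [Module ℝ Y] [TopologicalSpace Y]
  [IsTopologicalAddGroup Y] [ContinuousSMul ℝ Y]

/-! A point `y` is weakly minimal in `A` iff `y ∈ A` and `y ∉ A + int C`. Since `int C` is open,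
`cl (A + C) + int C = A + C + int C`, and for a convex cone `C + int C ⊆ int C`; hence
`Cl₊A + int C = A + int C`. As `0 ∈ cl C`, also `A ⊆ Cl₊A`, and the two descriptions of
`wMin A` and `A ∩ Inf A` coincide. -/

section Cone

variable {C : Set Y}

omit [TopologicalSpace Y] [IsTopologicalAddGroup Y] [ContinuousSMul ℝ Y] in
theorem Convex.add_self_subset (hC : Convex ℝ C) (hCone : ∀ r : ℝ, 0 < r → r • C ⊆ C) :
    C + C ⊆ C :=
  calc C + C = (1 + 1 : ℝ) • C := by rw [hC.add_smul zero_le_one zero_le_one, one_smul]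
    _ ⊆ C := hCone _ (by norm_num)

omit [ContinuousSMul ℝ Y] in
theorem Convex.add_interior_subset_interior (hC : Convex ℝ C)
    (hCone : ∀ r : ℝ, 0 < r → r • C ⊆ C) : C + interior C ⊆ interior C :=
  subset_interior_add_right.trans (interior_mono (hC.add_self_subset hCone))

omit [IsTopologicalAddGroup Y] in
theorem zero_mem_closure_of_smul_subset (hCone : ∀ r : ℝ, 0 < r → r • C ⊆ C)
    (hne : C.Nonempty) : (0 : Y) ∈ closure C := by
  obtain ⟨c, hc⟩ := hne
  have hlim : Filter.Tendsto (fun r : ℝ => r • c) (𝓝[>] 0) (𝓝 0) := by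
    simpa using ((Filter.tendsto_id (x := 𝓝 (0 : ℝ))).mono_left nhdsWithin_le_nhds).smul_const c
  exact mem_closure_of_tendsto hlim
    (eventually_nhdsWithin_of_forall fun r hr => hCone r hr (smul_mem_smul_set hc))

theorem subset_upClo (hCone : ∀ r : ℝ, 0 < r → r • C ⊆ C) (hne : C.Nonempty) (A : Set Y) :
    A ⊆ upClo C A := fun a ha => by
  have h : a + 0 ∈ upClo C A := map_mem_closure (continuous_const_add a)
    (zero_mem_closure_of_smul_subset hCone hne) fun c hc => add_mem_add ha hc
  rwa [add_zero] at h

theorem upClo_add_interior (hC : Convex ℝ C) (hCone : ∀ r : ℝ, 0 < r → r • C ⊆ C)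
    (hne : C.Nonempty) (A : Set Y) : upClo C A + interior C = A + interior C := by
  refine Subset.antisymm ?_ (add_subset_add_right (subset_upClo hCone hne A))
  rw [upClo, isOpen_interior.closure_add, add_assoc]
  exact add_subset_add_left (hC.add_interior_subset_interior hCone)

end Cone

omit [Module ℝ Y] [IsTopologicalAddGroup Y] [ContinuousSMul ℝ Y] in
theorem mem_wMinSet_iff {C A : Set Y} {y : Y} :
    y ∈ wMinSet C A ↔ y ∈ A ∧ y ∉ A + interior C := by
  simp only [wMinSet, mem_ofPred_eq, eq_empty_iff_forall_notMem, singleton_sub, mem_inter_iff,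
    mem_image, mem_add, not_exists, not_and, and_congr_right_iff]
  refine fun _ => ⟨fun h x hx u hu hxu => h _ ⟨u, hu, ?_⟩ hx, fun h x ⟨u, hu, hux⟩ hx => ?_⟩
  · rw [← hxu, add_sub_cancel_right]
  · exact h x hx u hu (by rw [← hux, sub_add_cancel])

theorem stmt_11_general (C A : Set Y) (hC : Convex ℝ C)
    (hCone : ∀ r : ℝ, 0 < r → r • C ⊆ C)
    (hInt : (interior C).Nonempty) :
    wMinSet C A = A ∩ infSet C A := by
  have hne : C.Nonempty := hInt.mono interior_subset
  ext y
  simp only [mem_inter_iff, infSet, mem_wMinSet_iff, upClo_add_interior hC hCone hne]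
  exact ⟨fun ⟨hyA, hy⟩ => ⟨hyA, subset_upClo hCone hne A hyA, hy⟩, fun ⟨hyA, _, hy⟩ => ⟨hyA, hy⟩⟩

theorem stmt_11 (C A : Set Y) (hC : Convex ℝ C)
    (hCone : ∀ r : ℝ, 0 < r → r • C ⊆ C)
    (hInt : (interior C).Nonempty) (hIntNe : interior C ≠ univ)
    (h1 : (upClo C A).Nonempty) (h2 : upClo C A ≠ univ) :
    wMinSet C A = A ∩ infSet C A :=
  stmt_11_general C A hC hCone hInt
end
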